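/- arXiv:0710.4015 — 2 statements merged into one kernel-verified Lean document; each statement's English description precedes it below -/
import Mathlib

section
/- Let N be a positive integer and let u1, u2, w, q_1,…,q_N, r_1,…,r_N : ℝ³ → ℝ be smooth functions of (x,y,t). Suppose: (i) u1_y + ∑_{i=1}^N (q_i r_i)_x − u1_{xx} − 2 u2_x = 0; (ii) 3 (u2 + u1_x)_y − 2 u1_t − u1_{xxx} + 3 ∑_{i=1}^N (q_{i,x} r_i)_x + 6 u1 u1_x − 3 u2_{xx} = 0; (iii) q_{i,t} = q_{i,xxx} + 3 u1 q_{i,x} + (3 u2 + 3 u1_x) q_i and r_{i,t} = r_{i,xxx} + 3 u1 r_{i,x} − 3 u2 r_i for i = 1,…,N; (iv) w_x = u1_y and 2 u2 = w + ∑_{i=1}^N q_i r_i − u1_x. Then u := u1 together with w, q_i, r_i satisfies the second type of KP equation with self-consistent sources: 4 u_t − 12 u u_x − u_{xxx} − 3 w_y = 3 ∑_{i=1}^N [q_{i,xx} r_i − q_i r_{i,xx} + (q_i r_i)_y], q_{i,t} = q_{i,xxx} + 3 u q_{i,x} + (3/2) q_i w + (3/2) q_i ∑_{j=1}^N q_j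 r_j + (3/2) u_x q_i, and r_{i,t} = r_{i,xxx} + 3 u r_{i,x} − (3/2) r_i w − (3/2) r_i ∑_{j=1}^N q_j r_j + (3/2) u_x r_i. -/
/-- Partial derivative in the first coordinate `x` of a function on `ℝ³ = ℝ × ℝ × ℝ`
(coordinates `(x, y, t)`). -/
noncomputable def pX (f : ℝ × ℝ × ℝ → ℝ) (p : ℝ × ℝ × ℝ) : ℝ :=
  deriv (fun s => f (s, p.2.1, p.2.2)) p.1

/-- Partial derivative in the second coordinate `y`. -/
noncomputable def pY (f : ℝ × ℝ × ℝ → ℝ) (p : ℝ × ℝ × ℝ) : ℝ :=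
  deriv (fun s => f (p.1, s, p.2.2)) p.2.1

/-- Partial derivative in the third coordinate `t`. -/
noncomputable def pT (f : ℝ × ℝ × ℝ → ℝ) (p : ℝ × ℝ × ℝ) : ℝ :=
  deriv (fun s => f (p.1, p.2.1, s)) p.2.2

section KPlemmas
variable {f g : ℝ × ℝ × ℝ → ℝ}

private lemma hasDerivAt_lineX (p : ℝ × ℝ × ℝ) :
    HasDerivAt (fun s : ℝ => ((s, p.2.1, p.2.2) : ℝ × ℝ × ℝ)) (1, 0, 0) p.1 := by
  simpa [Prod.mk_zero_zero] using (hasDerivAt_id p.1).prodMk (hasDerivAt_const p.1 (p.2.1, p.2.2))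

private lemma hasDerivAt_lineY (p : ℝ × ℝ × ℝ) :
    HasDerivAt (fun s : ℝ => ((p.1, s, p.2.2) : ℝ × ℝ × ℝ)) (0, 1, 0) p.2.1 := by
  simpa using (hasDerivAt_const p.2.1 p.1).prodMk
    ((hasDerivAt_id p.2.1).prodMk (hasDerivAt_const p.2.1 p.2.2))

private lemma diffX (hf : ContDiff ℝ (⊤ : ℕ∞) f) (p : ℝ × ℝ × ℝ) :
    DifferentiableAt ℝ (fun s => f (s, p.2.1, p.2.2)) p.1 := by
  have := ((hf.differentiable (by simp)) (p.1, p.2.1, p.2.2)).hasFDerivAt.comp_hasDerivAt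
    p.1 (hasDerivAt_lineX p)
  exact this.differentiableAt

private lemma diffY (hf : ContDiff ℝ (⊤ : ℕ∞) f) (p : ℝ × ℝ × ℝ) :
    DifferentiableAt ℝ (fun s => f (p.1, s, p.2.2)) p.2.1 := by
  have := ((hf.differentiable (by simp)) (p.1, p.2.1, p.2.2)).hasFDerivAt.comp_hasDerivAt
    p.2.1 (hasDerivAt_lineY p)
  exact this.differentiableAt

private lemma hasX (hf : ContDiff ℝ (⊤ : ℕ∞) f) (p : ℝ × ℝ × ℝ) :
    HasDerivAt (fun s => f (s, p.2.1, p.2.2)) (pX f p) p.1 :=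
  (diffX hf p).hasDerivAt

private lemma hasY (hf : ContDiff ℝ (⊤ : ℕ∞) f) (p : ℝ × ℝ × ℝ) :
    HasDerivAt (fun s => f (p.1, s, p.2.2)) (pY f p) p.2.1 :=
  (diffY hf p).hasDerivAt

private lemma pX_eq_fderiv (hf : ContDiff ℝ (⊤ : ℕ∞) f) (p : ℝ × ℝ × ℝ) :
    pX f p = fderiv ℝ f p (1, 0, 0) := by
  have h := ((hf.differentiable (by simp)) (p.1, p.2.1, p.2.2)).hasFDerivAt.comp_hasDerivAt
    p.1 (hasDerivAt_lineX p)
  simpa [pX, Function.comp_def] using h.deriv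

private lemma pY_eq_fderiv (hf : ContDiff ℝ (⊤ : ℕ∞) f) (p : ℝ × ℝ × ℝ) :
    pY f p = fderiv ℝ f p (0, 1, 0) := by
  have h := ((hf.differentiable (by simp)) (p.1, p.2.1, p.2.2)).hasFDerivAt.comp_hasDerivAt
    p.2.1 (hasDerivAt_lineY p)
  simpa [pY, Function.comp_def] using h.deriv

private lemma fderiv_apply_contDiff (hf : ContDiff ℝ (⊤ : ℕ∞) f) (v : ℝ × ℝ × ℝ) :
    ContDiff ℝ (⊤ : ℕ∞) (fun p => fderiv ℝ f p v) :=
  (ContinuousLinearMap.apply ℝ ℝ v).contDiff.comp (hf.fderiv_right (by simp))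

private lemma pX_contDiff (hf : ContDiff ℝ (⊤ : ℕ∞) f) : ContDiff ℝ (⊤ : ℕ∞) (pX f) := by
  have : pX f = fun p => fderiv ℝ f p (1, 0, 0) := funext (pX_eq_fderiv hf)
  rw [this]; exact fderiv_apply_contDiff hf _

private lemma pY_contDiff (hf : ContDiff ℝ (⊤ : ℕ∞) f) : ContDiff ℝ (⊤ : ℕ∞) (pY f) := by
  have : pY f = fun p => fderiv ℝ f p (0, 1, 0) := funext (pY_eq_fderiv hf)
  rw [this]; exact fderiv_apply_contDiff hf _

private lemma fderiv_fderiv_apply (hf : ContDiff ℝ (⊤ : ℕ∞) f) (p v w : ℝ × ℝ × ℝ) :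
    fderiv ℝ (fun z => fderiv ℝ f z v) p w = fderiv ℝ (fderiv ℝ f) p w v := by
  have hd : HasFDerivAt (fderiv ℝ f) (fderiv ℝ (fderiv ℝ f) p) p :=
    (((hf.fderiv_right (m := 1) (by exact WithTop.coe_le_coe.mpr le_top)).differentiable one_ne_zero) p).hasFDerivAt
  have h := ((ContinuousLinearMap.apply ℝ ℝ v).hasFDerivAt.comp p hd).fderiv
  have e : (fun z => fderiv ℝ f z v) = ⇑(ContinuousLinearMap.apply ℝ ℝ v) ∘ fderiv ℝ f := rfl
  rw [e, h]; rfl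

private lemma clairaut (hf : ContDiff ℝ (⊤ : ℕ∞) f) (p : ℝ × ℝ × ℝ) :
    pX (pY f) p = pY (pX f) p := by
  rw [pX_eq_fderiv (pY_contDiff hf) p, pY_eq_fderiv (pX_contDiff hf) p]
  have hy : pY f = fun z => fderiv ℝ f z (0, 1, 0) := funext (pY_eq_fderiv hf)
  have hx : pX f = fun z => fderiv ℝ f z (1, 0, 0) := funext (pX_eq_fderiv hf)
  rw [hy, hx, fderiv_fderiv_apply hf, fderiv_fderiv_apply hf]
  exact second_derivative_symmetric
    (fun y => ((hf.differentiable (by simp)) y).hasFDerivAt)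
    ((((hf.fderiv_right (m := 1) (by exact WithTop.coe_le_coe.mpr le_top)).differentiable one_ne_zero) p).hasFDerivAt) _ _

private lemma pX_mul (hf : ContDiff ℝ (⊤ : ℕ∞) f) (hg : ContDiff ℝ (⊤ : ℕ∞) g) (p : ℝ × ℝ × ℝ) :
    pX (fun z => f z * g z) p = pX f p * g p + f p * pX g p := by
  have h := deriv_fun_mul (diffX hf p) (diffX hg p)
  simpa [pX] using h

private lemma pX_add (hf : ContDiff ℝ (⊤ : ℕ∞) f) (hg : ContDiff ℝ (⊤ : ℕ∞) g) (p : ℝ × ℝ × ℝ) :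
    pX (fun z => f z + g z) p = pX f p + pX g p := by
  have h := deriv_fun_add (diffX hf p) (diffX hg p)
  simpa [pX] using h

private lemma pY_add (hf : ContDiff ℝ (⊤ : ℕ∞) f) (hg : ContDiff ℝ (⊤ : ℕ∞) g) (p : ℝ × ℝ × ℝ) :
    pY (fun z => f z + g z) p = pY f p + pY g p := by
  have h := deriv_fun_add (diffY hf p) (diffY hg p)
  simpa [pY] using h

private lemma pX_pX_mul (hf : ContDiff ℝ (⊤ : ℕ∞) f) (hg : ContDiff ℝ (⊤ : ℕ∞) g) (p : ℝ × ℝ × ℝ) :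
    pX (pX (fun z => f z * g z)) p
      = pX (pX f) p * g p + 2 * (pX f p * pX g p) + f p * pX (pX g) p := by
  have e : pX (fun z => f z * g z) = fun z => pX f z * g z + f z * pX g z :=
    funext (pX_mul hf hg)
  rw [e, pX_add ((pX_contDiff hf).mul hg) (hf.mul (pX_contDiff hg)),
    pX_mul (pX_contDiff hf) hg, pX_mul hf (pX_contDiff hg)]
  ring

end KPlemmas

/-- solutions of the `(n,k) = (3,2)` member of the extended KP hierarchy
satisfy the second type of KP equation with self-consistent sources. -/
theorem stmt_1 (N : ℕ) (hN : 0 < N)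
    (u1 u2 w : ℝ × ℝ × ℝ → ℝ) (q r : Fin N → ℝ × ℝ × ℝ → ℝ)
    (hu1 : ContDiff ℝ (⊤ : ℕ∞) u1) (hu2 : ContDiff ℝ (⊤ : ℕ∞) u2) (hw : ContDiff ℝ (⊤ : ℕ∞) w)
    (hq : ∀ i, ContDiff ℝ (⊤ : ℕ∞) (q i)) (hr : ∀ i, ContDiff ℝ (⊤ : ℕ∞) (r i))
    (h1 : ∀ p, pY u1 p + ∑ i, pX (fun z => q i z * r i z) p
        - pX (pX u1) p - 2 * pX u2 p = 0)
    (h2 : ∀ p, 3 * pY (fun z => u2 z + pX u1 z) p - 2 * pT u1 p - pX (pX (pX u1)) p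
        + 3 * ∑ i, pX (fun z => pX (q i) z * r i z) p
        + 6 * u1 p * pX u1 p - 3 * pX (pX u2) p = 0)
    (h3 : ∀ i, ∀ p, pT (q i) p = pX (pX (pX (q i))) p + 3 * u1 p * pX (q i) p
        + (3 * u2 p + 3 * pX u1 p) * q i p)
    (h4 : ∀ i, ∀ p, pT (r i) p = pX (pX (pX (r i))) p + 3 * u1 p * pX (r i) p
        - 3 * u2 p * r i p)
    (h5 : ∀ p, pX w p = pY u1 p)
    (h6 : ∀ p, 2 * u2 p = w p + ∑ i, q i p * r i p - pX u1 p) :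
    (∀ p, 4 * pT u1 p - 12 * u1 p * pX u1 p - pX (pX (pX u1)) p - 3 * pY w p
        = 3 * ∑ i, (pX (pX (q i)) p * r i p - q i p * pX (pX (r i)) p
            + pY (fun z => q i z * r i z) p))
    ∧ (∀ i, ∀ p, pT (q i) p = pX (pX (pX (q i))) p + 3 * u1 p * pX (q i) p
        + (3/2) * q i p * w p + (3/2) * q i p * ∑ j, q j p * r j p
        + (3/2) * pX u1 p * q i p)
    ∧ (∀ i, ∀ p, pT (r i) p = pX (pX (pX (r i))) p + 3 * u1 p * pX (r i) p
        - (3/2) * r i p * w p - (3/2) * r i p * ∑ j, q j p * r j p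
        + (3/2) * pX u1 p * r i p) := by
  refine ⟨?_, ?_, ?_⟩
  · intro p
    -- DX of h1
    have hXXu1 := pX_contDiff (pX_contDiff hu1)
    have hXqr : ∀ i, ContDiff ℝ (⊤ : ℕ∞) (pX (fun z => q i z * r i z)) :=
      fun i => pX_contDiff ((hq i).mul (hr i))
    have Hrhs : HasDerivAt
        (fun s => pX (pX u1) (s, p.2.1, p.2.2) + 2 * pX u2 (s, p.2.1, p.2.2)
          - ∑ i, pX (fun z => q i z * r i z) (s, p.2.1, p.2.2))
        (pX (pX (pX u1)) p + 2 * pX (pX u2) p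
          - ∑ i, pX (pX (fun z => q i z * r i z)) p) p.1 :=
      ((hasX hXXu1 p).add ((hasX (pX_contDiff hu2) p).const_mul 2)).sub
        (HasDerivAt.fun_sum (fun i _ => hasX (hXqr i) p))
    have efun : (fun s => pY u1 (s, p.2.1, p.2.2))
        = (fun s => pX (pX u1) (s, p.2.1, p.2.2) + 2 * pX u2 (s, p.2.1, p.2.2)
          - ∑ i, pX (fun z => q i z * r i z) (s, p.2.1, p.2.2)) :=
      funext fun s => by linarith [h1 (s, p.2.1, p.2.2)]
    rw [← efun] at Hrhs
    have F1 : pX (pY u1) p = pX (pX (pX u1)) p + 2 * pX (pX u2) p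
        - ∑ i, pX (pX (fun z => q i z * r i z)) p := Hrhs.deriv
    -- DY of h6
    have Hr2 : HasDerivAt
        (fun s => w (p.1, s, p.2.2)
          + ∑ i, q i (p.1, s, p.2.2) * r i (p.1, s, p.2.2) - pX u1 (p.1, s, p.2.2))
        (pY w p + ∑ i, pY (fun z => q i z * r i z) p - pY (pX u1) p) p.2.1 :=
      ((hasY hw p).add (HasDerivAt.fun_sum fun i _ => hasY ((hq i).mul (hr i)) p)).sub
        (hasY (pX_contDiff hu1) p)
    have efun2 : (fun s => 2 * u2 (p.1, s, p.2.2))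
        = (fun s => w (p.1, s, p.2.2)
          + ∑ i, q i (p.1, s, p.2.2) * r i (p.1, s, p.2.2) - pX u1 (p.1, s, p.2.2)) :=
      funext fun s => by linarith [h6 (p.1, s, p.2.2)]
    rw [← efun2] at Hr2
    have Hl2 : HasDerivAt (fun s => 2 * u2 (p.1, s, p.2.2)) (2 * pY u2 p) p.2.1 :=
      (hasY hu2 p).const_mul 2
    have F2 : 2 * pY u2 p
        = pY w p + ∑ i, pY (fun z => q i z * r i z) p - pY (pX u1) p :=
      Hl2.unique Hr2
    -- Clairaut
    have F4 : pX (pY u1) p = pY (pX u1) p := clairaut hu1 p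
    -- h2, with the y-derivative split
    have hPY : pY (fun z => u2 z + pX u1 z) p = pY u2 p + pY (pX u1) p :=
      pY_add hu2 (pX_contDiff hu1) p
    have F3 := h2 p
    rw [hPY] at F3
    -- sum expansions
    have G1 : ∑ i, pX (pX (fun z => q i z * r i z)) p
        = (∑ i, pX (pX (q i)) p * r i p) + 2 * (∑ i, pX (q i) p * pX (r i) p)
          + ∑ i, q i p * pX (pX (r i)) p := by
      rw [Finset.mul_sum, ← Finset.sum_add_distrib, ← Finset.sum_add_distrib]
      exact Finset.sum_congr rfl (fun i _ => pX_pX_mul (hq i) (hr i) p)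
    have G2 : ∑ i, pX (fun z => pX (q i) z * r i z) p
        = (∑ i, pX (pX (q i)) p * r i p) + ∑ i, pX (q i) p * pX (r i) p := by
      rw [← Finset.sum_add_distrib]
      exact Finset.sum_congr rfl (fun i _ => pX_mul (pX_contDiff (hq i)) (hr i) p)
    have G3 : ∑ i, (pX (pX (q i)) p * r i p - q i p * pX (pX (r i)) p
          + pY (fun z => q i z * r i z) p)
        = (∑ i, pX (pX (q i)) p * r i p) - (∑ i, q i p * pX (pX (r i)) p)
          + ∑ i, pY (fun z => q i z * r i z) p := by
      rw [Finset.sum_add_distrib, Finset.sum_sub_distrib]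
    rw [G3]
    linarith [F1, F2, F3, F4, G1, G2]
  · intro i p
    linear_combination h3 i p + (3 / 2) * q i p * h6 p
  · intro i p
    linear_combination h4 i p - (3 / 2) * r i p * h6 p
end

section
/- Let N be a positive integer, λ, ζ_1,…,ζ_N real constants with λ ≠ ζ_i² for all i, and let u, q_1,…,q_N, r_1,…,r_N, ψ : ℝ² → ℝ be smooth functions of (x,t). Assume: (i) u_t − 3 u u_x − (1/4) u_{xxx} + ∑_{i=1}^N (q_i r_i)_x = 0; (ii) q_{i,xx} + 2 u q_i = ζ_i² q_i and r_{i,xx} + 2 u r_i = ζ_i² r_i for i = 1,…,N; (iii) ψ_{xx} + 2 u ψ = λ ψ. Define φ_i := (r_i ψ_x − r_{i,x} ψ)/(λ − ζ_i²) and χ := ψ_t − ψ_{xxx} − 3 u ψ_x − (3/2) u_x ψ − ∑_{i=1}^N q_i φ_i. Then χ_{xx} + 2 u χ = λ χ. (This is the content of the Lax representation (∂² + 2u)ψ = λψ, ψ_t = (∂³ + 3u∂ + (3/2)u' + ∑ q_i ∂^{-1} r_i)ψ for the first type of KdV equation with self-consistent sources: the third-order flow preserves the eigenvalue problem.) -/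
/-- Partial derivative in the first coordinate of a function on `ℝ²`. -/
noncomputable def dX (f : ℝ × ℝ → ℝ) (p : ℝ × ℝ) : ℝ :=
  deriv (fun s => f (s, p.2)) p.1

/-- Partial derivative in the second coordinate of a function on `ℝ²`. -/
noncomputable def dS (f : ℝ × ℝ → ℝ) (p : ℝ × ℝ) : ℝ :=
  deriv (fun s => f (p.1, s)) p.2

lemma hasDerivAt_dX {f : ℝ × ℝ → ℝ} (hf : ContDiff ℝ (⊤ : ℕ∞) f) (p : ℝ × ℝ) :
    HasDerivAt (fun s => f (s, p.2)) (dX f p) p.1 := by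
  have h : ContDiff ℝ (⊤ : ℕ∞) (fun s : ℝ => f (s, p.2)) :=
    hf.comp (contDiff_id.prodMk contDiff_const)
  exact ((h.differentiable (by simp)).differentiableAt).hasDerivAt

lemma hasDerivAt_dS {f : ℝ × ℝ → ℝ} (hf : ContDiff ℝ (⊤ : ℕ∞) f) (p : ℝ × ℝ) :
    HasDerivAt (fun s => f (p.1, s)) (dS f p) p.2 := by
  have h : ContDiff ℝ (⊤ : ℕ∞) (fun s : ℝ => f (p.1, s)) :=
    hf.comp (contDiff_const.prodMk contDiff_id)
  exact ((h.differentiable (by simp)).differentiableAt).hasDerivAt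

lemma dX_eq_fderiv {f : ℝ × ℝ → ℝ} (hf : ContDiff ℝ (⊤ : ℕ∞) f) (p : ℝ × ℝ) :
    dX f p = fderiv ℝ f p (1, 0) := by
  have hγ : HasDerivAt (fun s : ℝ => (s, p.2)) ((1 : ℝ), (0 : ℝ)) p.1 :=
    (hasDerivAt_id p.1).prodMk (hasDerivAt_const p.1 p.2)
  have h := (((hf.differentiable (by simp)) (p.1, p.2)).hasFDerivAt).comp_hasDerivAt p.1 hγ
  simp only [Prod.mk.eta] at h
  exact ((hasDerivAt_dX hf p).unique h)

lemma dS_eq_fderiv {f : ℝ × ℝ → ℝ} (hf : ContDiff ℝ (⊤ : ℕ∞) f) (p : ℝ × ℝ) :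
    dS f p = fderiv ℝ f p (0, 1) := by
  have hγ : HasDerivAt (fun s : ℝ => (p.1, s)) ((0 : ℝ), (1 : ℝ)) p.2 :=
    (hasDerivAt_const p.2 p.1).prodMk (hasDerivAt_id p.2)
  have h := (((hf.differentiable (by simp)) (p.1, p.2)).hasFDerivAt).comp_hasDerivAt p.2 hγ
  simp only [Prod.mk.eta] at h
  exact ((hasDerivAt_dS hf p).unique h)

lemma fderiv_contDiff' {f : ℝ × ℝ → ℝ} (hf : ContDiff ℝ (⊤ : ℕ∞) f) :
    ContDiff ℝ (⊤ : ℕ∞) (fun p => fderiv ℝ f p) :=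
  hf.fderiv_right (by simp)

lemma dX_contDiff {f : ℝ × ℝ → ℝ} (hf : ContDiff ℝ (⊤ : ℕ∞) f) : ContDiff ℝ (⊤ : ℕ∞) (dX f) := by
  have : dX f = fun p => fderiv ℝ f p (1, 0) := funext (dX_eq_fderiv hf)
  rw [this]
  exact (fderiv_contDiff' hf).clm_apply contDiff_const

lemma dS_contDiff {f : ℝ × ℝ → ℝ} (hf : ContDiff ℝ (⊤ : ℕ∞) f) : ContDiff ℝ (⊤ : ℕ∞) (dS f) := by
  have : dS f = fun p => fderiv ℝ f p (0, 1) := funext (dS_eq_fderiv hf)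
  rw [this]
  exact (fderiv_contDiff' hf).clm_apply contDiff_const

lemma dX_dS_comm {f : ℝ × ℝ → ℝ} (hf : ContDiff ℝ (⊤ : ℕ∞) f) (p : ℝ × ℝ) :
    dX (dS f) p = dS (dX f) p := by
  have hfd := fderiv_contDiff' hf
  have h1 : dX (dS f) p = fderiv ℝ (fderiv ℝ f) p (1, 0) (0, 1) := by
    rw [dX_eq_fderiv (dS_contDiff hf) p]
    have : dS f = fun z => fderiv ℝ f z (0, 1) := funext (dS_eq_fderiv hf)
    rw [this, fderiv_clm_apply ((hfd.differentiable (by simp)).differentiableAt)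
      (differentiableAt_const _)]
    simp
  have h2 : dS (dX f) p = fderiv ℝ (fderiv ℝ f) p (0, 1) (1, 0) := by
    rw [dS_eq_fderiv (dX_contDiff hf) p]
    have : dX f = fun z => fderiv ℝ f z (1, 0) := funext (dX_eq_fderiv hf)
    rw [this, fderiv_clm_apply ((hfd.differentiable (by simp)).differentiableAt)
      (differentiableAt_const _)]
    simp
  rw [h1, h2]
  exact (hf.contDiffAt.isSymmSndFDerivAt (by norm_num; exact WithTop.coe_le_coe.mpr le_top)) _ _

/-- the third-order Lax flow of the first type of KdV equation with
self-consistent sources preserves the Schrödinger eigenvalue problem: the residual `χ`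
is again an eigenfunction. Here the coordinates of `ℝ²` are `(x, t)`. -/
theorem stmt_8 (N : ℕ) (hN : 0 < N) (lam : ℝ) (ζ : Fin N → ℝ)
    (hlam : ∀ i, lam ≠ ζ i ^ 2)
    (u : ℝ × ℝ → ℝ) (q r : Fin N → ℝ × ℝ → ℝ) (ψ : ℝ × ℝ → ℝ)
    (hu : ContDiff ℝ (⊤ : ℕ∞) u)
    (hq : ∀ i, ContDiff ℝ (⊤ : ℕ∞) (q i)) (hr : ∀ i, ContDiff ℝ (⊤ : ℕ∞) (r i))
    (hψ : ContDiff ℝ (⊤ : ℕ∞) ψ)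
    (h1 : ∀ p, dS u p - 3 * u p * dX u p - (1/4) * dX (dX (dX u)) p
        + ∑ i, dX (fun z => q i z * r i z) p = 0)
    (h2 : ∀ i, ∀ p, dX (dX (q i)) p + 2 * u p * q i p = ζ i ^ 2 * q i p)
    (h3 : ∀ i, ∀ p, dX (dX (r i)) p + 2 * u p * r i p = ζ i ^ 2 * r i p)
    (h4 : ∀ p, dX (dX ψ) p + 2 * u p * ψ p = lam * ψ p)
    (φ : Fin N → ℝ × ℝ → ℝ)
    (hφ : ∀ i, ∀ p, φ i p = (r i p * dX ψ p - dX (r i) p * ψ p) / (lam - ζ i ^ 2))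
    (χ : ℝ × ℝ → ℝ)
    (hχ : ∀ p, χ p = dS ψ p - dX (dX (dX ψ)) p - 3 * u p * dX ψ p
        - (3/2) * dX u p * ψ p - ∑ i, q i p * φ i p) :
    ∀ p, dX (dX χ) p + 2 * u p * χ p = lam * χ p := by

  -- smoothness
  have hu1 : ContDiff ℝ (⊤ : ℕ∞) (dX u) := dX_contDiff hu
  have hu2 : ContDiff ℝ (⊤ : ℕ∞) (dX (dX u)) := dX_contDiff hu1
  have hψ1 : ContDiff ℝ (⊤ : ℕ∞) (dX ψ) := dX_contDiff hψ
  have hq1 : ∀ i, ContDiff ℝ (⊤ : ℕ∞) (dX (q i)) := fun i => dX_contDiff (hq i)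
  have hr1 : ∀ i, ContDiff ℝ (⊤ : ℕ∞) (dX (r i)) := fun i => dX_contDiff (hr i)
  have hne : ∀ i, lam - ζ i ^ 2 ≠ 0 := fun i => sub_ne_zero.mpr (hlam i)
  have hφf : ∀ i, φ i
      = fun p => (lam - ζ i ^ 2)⁻¹ * (r i p * dX ψ p - dX (r i) p * ψ p) := by
    intro i; funext p; rw [hφ i p]; field_simp
  have hφc : ∀ i, ContDiff ℝ (⊤ : ℕ∞) (φ i) := by
    intro i; rw [hφf i]
    exact contDiff_const.mul (((hr i).mul hψ1).sub ((hr1 i).mul hψ))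
  have hφ'' : ∀ i p, (lam - ζ i ^ 2) * φ i p = r i p * dX ψ p - dX (r i) p * ψ p := by
    intro i p
    have e := hφ i p
    rw [eq_div_iff (hne i)] at e
    linear_combination e
  -- second x-derivative of ψ
  have dψ2 : ∀ p, dX (dX ψ) p = lam * ψ p - 2 * (u p * ψ p) := by
    intro p; linear_combination h4 p
  have ψ2f : dX (dX ψ) = fun p => lam * ψ p - 2 * (u p * ψ p) := funext dψ2
  -- x-derivative of φ
  have dφ : ∀ i p, dX (φ i) p = r i p * ψ p := by
    intro i p
    have H := (((hasDerivAt_dX (hr i) p).mul (hasDerivAt_dX hψ1 p)).sub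
      ((hasDerivAt_dX (hr1 i) p).mul (hasDerivAt_dX hψ p))).const_mul (lam - ζ i ^ 2)⁻¹
    have e : dX (φ i) p = (lam - ζ i ^ 2)⁻¹ *
        ((dX (r i) p * dX ψ p + r i p * dX (dX ψ) p)
          - (dX (dX (r i)) p * ψ p + dX (r i) p * dX ψ p)) := by
      rw [hφf i]; exact H.deriv
    have h3' : dX (dX (r i)) p = ζ i ^ 2 * r i p - 2 * u p * r i p := by
      linear_combination h3 i p
    have key : dX (r i) p * dX ψ p + r i p * (lam * ψ p - 2 * (u p * ψ p))
        - ((ζ i ^ 2 * r i p - 2 * u p * r i p) * ψ p + dX (r i) p * dX ψ p)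
        = (lam - ζ i ^ 2) * (r i p * ψ p) := by ring
    rw [e, h3', dψ2 p, key, inv_mul_cancel_left₀ (hne i)]
  -- third x-derivative of ψ
  have dψ3 : ∀ p, dX (dX (dX ψ)) p
      = lam * dX ψ p - 2 * (dX u p * ψ p + u p * dX ψ p) := by
    intro p
    have H := ((hasDerivAt_dX hψ p).const_mul lam).sub
      (((hasDerivAt_dX hu p).mul (hasDerivAt_dX hψ p)).const_mul 2)
    rw [ψ2f]; exact H.deriv
  -- simplified formula for χ
  have χf : χ = fun p => dS ψ p - lam * dX ψ p - u p * dX ψ p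
      + (1/2) * (dX u p * ψ p) - ∑ i, q i p * φ i p := by
    funext p; rw [hχ p, dψ3 p]; ring
  -- first derivative of χ (raw)
  have dχ_raw : ∀ p, dX χ p =
      dX (dS ψ) p - lam * dX (dX ψ) p
        - (dX u p * dX ψ p + u p * dX (dX ψ) p)
        + (1/2) * (dX (dX u) p * ψ p + dX u p * dX ψ p)
        - ∑ i, (dX (q i) p * φ i p + q i p * dX (φ i) p) := by
    intro p
    have H := (((((hasDerivAt_dX (dS_contDiff hψ) p).sub
        ((hasDerivAt_dX hψ1 p).const_mul lam)).sub
        ((hasDerivAt_dX hu p).mul (hasDerivAt_dX hψ1 p))).add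
        (((hasDerivAt_dX hu1 p).mul (hasDerivAt_dX hψ p)).const_mul (1/2))).sub
        (HasDerivAt.fun_sum (u := Finset.univ) (fun i _ =>
          (hasDerivAt_dX (hq i) p).mul (hasDerivAt_dX (hφc i) p))))
    rw [χf]; exact H.deriv
  -- simplified function form of dX χ
  have dχf : dX χ = fun p =>
      dS (dX ψ) p - lam * (lam * ψ p - 2 * (u p * ψ p))
        - (dX u p * dX ψ p + u p * (lam * ψ p - 2 * (u p * ψ p)))
        + (1/2) * (dX (dX u) p * ψ p + dX u p * dX ψ p)
        - ∑ i, (dX (q i) p * φ i p + q i p * (r i p * ψ p)) := by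
    funext p
    rw [dχ_raw p, dX_dS_comm hψ p, dψ2 p]
    congr 1
    exact Finset.sum_congr rfl fun i _ => by rw [dφ i p]
  -- second derivative of χ (raw)
  have ddχ_raw : ∀ p, dX (dX χ) p =
      dX (dS (dX ψ)) p
        - lam * (lam * dX ψ p - 2 * (dX u p * ψ p + u p * dX ψ p))
        - ((dX (dX u) p * dX ψ p + dX u p * dX (dX ψ) p)
          + (dX u p * (lam * ψ p - 2 * (u p * ψ p))
            + u p * (lam * dX ψ p - 2 * (dX u p * ψ p + u p * dX ψ p))))
        + (1/2) * ((dX (dX (dX u)) p * ψ p + dX (dX u) p * dX ψ p)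
          + (dX (dX u) p * dX ψ p + dX u p * dX (dX ψ) p))
        - ∑ i, ((dX (dX (q i)) p * φ i p + dX (q i) p * dX (φ i) p)
          + (dX (q i) p * (r i p * ψ p)
            + q i p * (dX (r i) p * ψ p + r i p * dX ψ p))) := by
    intro p
    have Hψ := hasDerivAt_dX hψ p
    have Hψ1 := hasDerivAt_dX hψ1 p
    have Hu := hasDerivAt_dX hu p
    have Hu1 := hasDerivAt_dX hu1 p
    have Hu2 := hasDerivAt_dX hu2 p
    have H := (((((hasDerivAt_dX (dS_contDiff hψ1) p).sub
        (((Hψ.const_mul lam).sub ((Hu.mul Hψ).const_mul 2)).const_mul lam)).sub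
        ((Hu1.mul Hψ1).add
          (Hu.mul ((Hψ.const_mul lam).sub ((Hu.mul Hψ).const_mul 2))))).add
        (((Hu2.mul Hψ).add (Hu1.mul Hψ1)).const_mul (1/2))).sub
        (HasDerivAt.fun_sum (u := Finset.univ) (fun i _ =>
          ((hasDerivAt_dX (hq1 i) p).mul (hasDerivAt_dX (hφc i) p)).add
            ((hasDerivAt_dX (hq i) p).mul
              ((hasDerivAt_dX (hr i) p).mul Hψ)))))
    rw [dχf]; exact H.deriv
  -- the time-slice derivative of the eigen-equation
  intro p
  have hA2 : dS (dX (dX ψ)) p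
      = lam * dS ψ p - 2 * (dS u p * ψ p + u p * dS ψ p) := by
    have H := ((hasDerivAt_dS hψ p).const_mul lam).sub
      (((hasDerivAt_dS hu p).mul (hasDerivAt_dS hψ p)).const_mul 2)
    rw [ψ2f]; exact H.deriv
  -- rewrite the source term of h1
  have hqr : ∀ i, dX (fun z => q i z * r i z) p
      = dX (q i) p * r i p + q i p * dX (r i) p := fun i =>
    ((hasDerivAt_dX (hq i) p).mul (hasDerivAt_dX (hr i) p)).deriv
  have h1p : dS u p - 3 * u p * dX u p - (1/4) * dX (dX (dX u)) p
      + ∑ i, (dX (q i) p * r i p + q i p * dX (r i) p) = 0 := by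
    have := h1 p
    simp only [hqr] at this
    exact this
  -- per-index identity for the source sum
  have hterm : ∀ i, ((dX (dX (q i)) p * φ i p + dX (q i) p * dX (φ i) p)
      + (dX (q i) p * (r i p * ψ p)
        + q i p * (dX (r i) p * ψ p + r i p * dX ψ p)))
      = lam * (q i p * φ i p) - 2 * (u p * (q i p * φ i p))
        + 2 * ψ p * (dX (q i) p * r i p + q i p * dX (r i) p) := by
    intro i
    linear_combination (φ i p) * h2 i p + dX (q i) p * dφ i p - q i p * hφ'' i p
  have hsum : (∑ i, ((dX (dX (q i)) p * φ i p + dX (q i) p * dX (φ i) p)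
      + (dX (q i) p * (r i p * ψ p)
        + q i p * (dX (r i) p * ψ p + r i p * dX ψ p))))
      = lam * (∑ i, q i p * φ i p) - 2 * (u p * (∑ i, q i p * φ i p))
        + 2 * ψ p * (∑ i, (dX (q i) p * r i p + q i p * dX (r i) p)) := by
    rw [Finset.sum_congr rfl fun i _ => hterm i]
    simp only [Finset.sum_add_distrib, Finset.sum_sub_distrib, ← Finset.mul_sum]
  rw [ddχ_raw p, dX_dS_comm hψ1 p, hA2, dψ2 p, hsum, χf]
  simp only []
  linear_combination (-2 * ψ p) * h1p
end
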